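/- arXiv:1807.08040 — 2 statements merged into one kernel-verified Lean document; each statement's English description precedes it below -/
import Mathlib

section
/- If S, E, I, C : [0,∞) → ℝ are nonnegative differentiable solutions of S' = -σIS - ωSC, E' = σIS + ωSC - λE, I' = λ₁E - γI, C' = γ₁I - μC with λ₂ = λ - λ₁ > 0, γ₂ = γ - γ₁ > 0, μ > 0, then ∫₀^∞ (E(s) + I(s) + C(s)) ds < ∞. -/
/-!
The total population `W = S + E + I + C` is a Lyapunov function: along solutions
`W' = -(λ₂ E + γ₂ I + μ C)`. Since `W ≥ 0`, integrating gives
`∫₀^T (λ₂ E + γ₂ I + μ C) ≤ W 0` for every `T`, and `E + I + C` is bounded by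
`min(λ₂, γ₂, μ)⁻¹` times that integrand.
-/

open Set Filter MeasureTheory

theorem integrableOn_Ioi_of_hasDerivAt_neg_of_forall_le {W g : ℝ → ℝ} {a m : ℝ}
    (hW : ∀ t ≥ a, HasDerivAt W (-g t) t) (hg : ∀ t ≥ a, 0 ≤ g t) (hm : ∀ t ≥ a, m ≤ W t) :
    IntegrableOn g (Ioi a) := by
  have hW' : ∀ t ≥ a, HasDerivAt (-W) (g t) t := fun t ht => by
    simpa using (hW t ht).neg
  have hint : ∀ b, IntegrableOn g (Ioc a b) := fun b =>
    intervalIntegral.integrableOn_deriv_of_nonneg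
      (fun t ht => (hW' t ht.1).continuousAt.continuousWithinAt)
      (fun t ht => hW' t ht.1.le) (fun t ht => hg t ht.1.le)
  refine integrableOn_Ioi_of_intervalIntegral_norm_bounded (W a - m) a
    (b := fun n : ℕ => a + n) (fun _ => hint _)
    (tendsto_atTop_add_const_left _ a tendsto_natCast_atTop_atTop)
    (Eventually.of_forall fun n => ?_)
  have hab : a ≤ a + n := le_add_of_nonneg_right n.cast_nonneg
  calc ∫ t in a..a + n, ‖g t‖
      = ∫ t in a..a + n, g t := intervalIntegral.integral_congr fun t ht => by
        rw [uIcc_of_le hab] at ht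
        exact Real.norm_of_nonneg (hg t ht.1)
    _ = W a - W (a + n) := by
        rw [intervalIntegral.integral_eq_sub_of_hasDerivAt
          (fun t ht => hW' t (by rw [uIcc_of_le hab] at ht; exact ht.1))
          ((intervalIntegrable_iff_integrableOn_Ioc_of_le hab).2 (hint _))]
        simp only [Pi.neg_apply]; ring
    _ ≤ W a - m := by linarith [hm (a + n) hab]

theorem add_add_le_div_min {x y z p q r : ℝ} (hx : 0 ≤ x) (hy : 0 ≤ y) (hz : 0 ≤ z)
    (hc : 0 < min p (min q r)) :
    x + y + z ≤ (p * x + q * y + r * z) / min p (min q r) := by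
  rw [le_div_iff₀ hc]
  have hpx := mul_le_mul_of_nonneg_right (min_le_left p (min q r)) hx
  have hqy := mul_le_mul_of_nonneg_right ((min_le_right p _).trans (min_le_left q r)) hy
  have hrz := mul_le_mul_of_nonneg_right ((min_le_right p _).trans (min_le_right q r)) hz
  linarith

theorem stmt_2_general (σ ω μ lam lam1 lam2 γ γ₁ γ₂ : ℝ)
    (hμ : 0 < μ) (hlam2 : 0 < lam2)
    (hγ₂ : 0 < γ₂) (hlam : lam = lam1 + lam2) (hγ : γ = γ₁ + γ₂)
    (S E I C : ℝ → ℝ)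
    (hS : ∀ t ≥ (0:ℝ), HasDerivAt S (-σ * I t * S t - ω * S t * C t) t)
    (hE : ∀ t ≥ (0:ℝ), HasDerivAt E (σ * I t * S t + ω * S t * C t - lam * E t) t)
    (hI : ∀ t ≥ (0:ℝ), HasDerivAt I (lam1 * E t - γ * I t) t)
    (hC : ∀ t ≥ (0:ℝ), HasDerivAt C (γ₁ * I t - μ * C t) t)
    (hnn : ∀ t ≥ (0:ℝ), 0 ≤ S t ∧ 0 ≤ E t ∧ 0 ≤ I t ∧ 0 ≤ C t) :
    IntegrableOn (fun s => E s + I s + C s) (Ioi 0) := by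
  have hc : 0 < min lam2 (min γ₂ μ) := lt_min hlam2 (lt_min hγ₂ hμ)
  have hdecay : IntegrableOn (fun t => lam2 * E t + γ₂ * I t + μ * C t) (Ioi 0) := by
    refine integrableOn_Ioi_of_hasDerivAt_neg_of_forall_le (W := fun t => S t + E t + I t + C t)
      (m := 0) (fun t ht => ?_) (fun t ht => ?_) (fun t ht => ?_)
    · refine ((((hS t ht).add (hE t ht)).add (hI t ht)).add (hC t ht)).congr_deriv ?_
      rw [hlam, hγ]; ring
    · obtain ⟨-, hE0, hI0, hC0⟩ := hnn t ht; positivity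
    · obtain ⟨hS0, hE0, hI0, hC0⟩ := hnn t ht; positivity
  have hcont : ContinuousOn (fun s => E s + I s + C s) (Ioi 0) := fun t ht =>
    (((hE t ht.le).continuousAt.add (hI t ht.le).continuousAt).add
      (hC t ht.le).continuousAt).continuousWithinAt
  refine (hdecay.div_const (min lam2 (min γ₂ μ))).mono'
    (hcont.aestronglyMeasurable measurableSet_Ioi)
    ((ae_restrict_iff' measurableSet_Ioi).2 (Eventually.of_forall fun t ht => ?_))
  obtain ⟨-, hE0, hI0, hC0⟩ := hnn t (mem_Ioi.1 ht).le
  rw [Real.norm_of_nonneg (by positivity)]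
  exact add_add_le_div_min hE0 hI0 hC0 hc

theorem stmt_2 (σ ω μ lam lam1 lam2 γ γ₁ γ₂ : ℝ)
    (hσ : 0 < σ) (hω : 0 < ω) (hμ : 0 < μ) (hlam1 : 0 < lam1) (hlam2 : 0 < lam2)
    (hγ₁ : 0 < γ₁) (hγ₂ : 0 < γ₂) (hlam : lam = lam1 + lam2) (hγ : γ = γ₁ + γ₂)
    (S E I C : ℝ → ℝ)
    (hS : ∀ t ≥ (0:ℝ), HasDerivAt S (-σ * I t * S t - ω * S t * C t) t)
    (hE : ∀ t ≥ (0:ℝ), HasDerivAt E (σ * I t * S t + ω * S t * C t - lam * E t) t)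
    (hI : ∀ t ≥ (0:ℝ), HasDerivAt I (lam1 * E t - γ * I t) t)
    (hC : ∀ t ≥ (0:ℝ), HasDerivAt C (γ₁ * I t - μ * C t) t)
    (hnn : ∀ t ≥ (0:ℝ), 0 ≤ S t ∧ 0 ≤ E t ∧ 0 ≤ I t ∧ 0 ≤ C t) :
    IntegrableOn (fun s => E s + I s + C s) (Ioi 0) :=
  stmt_2_general σ ω μ lam lam1 lam2 γ γ₁ γ₂ hμ hlam2 hγ₂ hlam hγ S E I C hS hE hI hC hnn
end

section
/- Let ε : [0,∞) → ℝ with ε(t) → 0 as t → ∞, and let ψ : [0,∞) → ℝ be nonnegative, differentiable, with ψ(0) > 0, satisfying ψ' ≤ ε(t) - σ₁ψ² for a constant σ₁ > 0. Then ψ(t) → 0 as t → ∞. -/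
open Set Filter

theorem stmt_8 (σ₁ : ℝ) (hσ₁ : 0 < σ₁) (ε ψ : ℝ → ℝ)
    (hε : Tendsto ε atTop (nhds 0))
    (hnn : ∀ t ≥ (0:ℝ), 0 ≤ ψ t) (hdiff : Differentiable ℝ ψ)
    (hψ0 : 0 < ψ 0)
    (hineq : ∀ t ≥ (0:ℝ), deriv ψ t ≤ ε t - σ₁ * ψ t ^ 2) :
    Tendsto ψ atTop (nhds 0) := by
  have key : ∀ δ > (0:ℝ), ∃ N : ℝ, 0 ≤ N ∧ ∀ t ≥ N, ψ t ≤ δ := by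
    intro δ hδ
    set c : ℝ := σ₁ * δ ^ 2 / 2 with hc
    have hcpos : 0 < c := by positivity
    obtain ⟨N₀, hN₀⟩ := Metric.tendsto_atTop.mp hε c hcpos
    set T := max N₀ 0 with hT
    have hT0 : (0:ℝ) ≤ T := le_max_right _ _
    have hε' : ∀ t ≥ T, ε t ≤ c := by
      intro t ht
      have := hN₀ t (le_trans (le_max_left _ _) ht)
      rw [Real.dist_eq, sub_zero] at this
      exact (abs_le.mp this.le).2
    have hder : ∀ t ≥ T, δ < ψ t → deriv ψ t ≤ -c := by
      intro t ht hψ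
      have h1 := hineq t (hT0.trans ht)
      have h2 := hε' t ht
      have h3 : σ₁ * δ ^ 2 ≤ σ₁ * ψ t ^ 2 := by
        apply mul_le_mul_of_nonneg_left _ hσ₁.le
        nlinarith
      nlinarith
    have step1 : ∃ t₀ ≥ T, ψ t₀ ≤ δ := by
      by_contra h
      push_neg at h
      obtain ⟨t, htdef⟩ : ∃ t : ℝ, t = T + (ψ T + 1) / c := ⟨_, rfl⟩
      have hψT : 0 ≤ ψ T := hnn T hT0
      have htT : T < t := by
        have h0 : 0 < (ψ T + 1) / c := by positivity
        rw [htdef]; linarith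
      obtain ⟨x, hx, hslope⟩ := exists_deriv_eq_slope ψ htT
        (hdiff.continuous.continuousOn) (fun y _ => (hdiff y).differentiableWithinAt)
      have hxT : T ≤ x := hx.1.le
      have hd : deriv ψ x ≤ -c := hder x hxT (h x hxT)
      have hψt : 0 ≤ ψ t := hnn t (hT0.trans htT.le)
      rw [hslope] at hd
      have h5 : ψ t - ψ T ≤ -c * (t - T) := by
        rwa [div_le_iff₀ (by linarith)] at hd
      have h6 : t - T = (ψ T + 1) / c := by rw [htdef]; ring
      have h7 : c * ((ψ T + 1) / c) = ψ T + 1 := by field_simp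
      rw [h6] at h5
      linarith
    obtain ⟨t₀, ht₀T, hψt₀⟩ := step1
    refine ⟨t₀, hT0.trans ht₀T, ?_⟩
    intro t₁ ht₁
    by_contra hcon
    push_neg at hcon
    have ht₀t₁ : t₀ < t₁ := by
      rcases lt_or_eq_of_le ht₁ with h | h
      · exact h
      · exact absurd hψt₀ (by rw [h]; exact not_le.mpr hcon)
    set S : Set ℝ := Icc t₀ t₁ ∩ ψ ⁻¹' Iic δ with hS
    have hSne : S.Nonempty := ⟨t₀, ⟨le_refl _, ht₀t₁.le⟩, hψt₀⟩
    have hSbdd : BddAbove S := ⟨t₁, fun x hx => hx.1.2⟩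
    have hSclosed : IsClosed S :=
      (isClosed_Icc).inter (isClosed_Iic.preimage hdiff.continuous)
    set s := sSup S with hs
    have hsS : s ∈ S := hSclosed.csSup_mem hSne hSbdd
    have hψs : ψ s ≤ δ := hsS.2
    have hst₀ : t₀ ≤ s := hsS.1.1
    have hst₁ : s < t₁ := lt_of_le_of_ne hsS.1.2 (by
      intro h; rw [h] at hψs; exact absurd hψs (not_le.mpr hcon))
    have hgt : ∀ u, s < u → u ≤ t₁ → δ < ψ u := by
      intro u hu hu'
      by_contra hle
      push_neg at hle
      have : u ∈ S := ⟨⟨hst₀.trans hu.le, hu'⟩, hle⟩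
      exact absurd (le_csSup hSbdd this) (not_le.mpr hu)
    obtain ⟨x, hx, hslope⟩ := exists_deriv_eq_slope ψ hst₁
      (hdiff.continuous.continuousOn) (fun y _ => (hdiff y).differentiableWithinAt)
    have hxT : T ≤ x := le_trans ht₀T (hst₀.trans hx.1.le)
    have hd : deriv ψ x ≤ -c := hder x hxT (hgt x hx.1 hx.2.le)
    rw [hslope] at hd
    have h5 : ψ t₁ - ψ s ≤ -c * (t₁ - s) := by
      rwa [div_le_iff₀ (by linarith)] at hd
    nlinarith
  rw [Metric.tendsto_atTop]
  intro δ hδ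
  obtain ⟨N, hN0, hN⟩ := key (δ / 2) (by linarith)
  refine ⟨N, fun t ht => ?_⟩
  rw [Real.dist_eq, sub_zero, abs_of_nonneg (hnn t (hN0.trans ht))]
  linarith [hN t ht]
end
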